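/- arXiv:2004.07118 — 3 statements merged into one kernel-verified Lean document; each statement's English description precedes it below -/
import Mathlib

section
/- Let G be a complete edge-colored permutation graph. Then for every strong module M of G with |M| ≥ 2, the quotient graph G[M]/P_max(M) is a complete edge-colored permutation graph. -/
/-- The edge relation `E` on `V` together with the labeling `ℓ : V ≃ Fin n`
is the simple permutation graph of the permutation `π` of `{1,…,n}`:
`{u,v} ∈ E ⇔ ℓ(u) > ℓ(v) and π⁻¹(ℓ(u)) < π⁻¹(ℓ(v))` (stated symmetrically in `u,v`). -/
def IsPermGraph {V : Type*} {n : ℕ} (E : V → V → Prop) (ℓ : V ≃ Fin n)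
    (π : Equiv.Perm (Fin n)) : Prop :=
  ∀ u v : V, E u v ↔
    ((ℓ v < ℓ u ∧ π⁻¹ (ℓ u) < π⁻¹ (ℓ v)) ∨ (ℓ u < ℓ v ∧ π⁻¹ (ℓ v) < π⁻¹ (ℓ u)))

/-- `c` is the edge-coloring of a complete `k`-edge-colored graph on `V`:
it is symmetric, every pair of distinct vertices receives a color in `{1,…,k}`,
and every color in `{1,…,k}` occurs on some edge. -/
def IsCompleteColoring {V : Type*} (k : ℕ) (c : V → V → ℕ) : Prop :=
  (∀ u v : V, c u v = c v u) ∧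
  (∀ u v : V, u ≠ v → c u v ∈ Finset.Icc 1 k) ∧
  (∀ i ∈ Finset.Icc 1 k, ∃ u v : V, u ≠ v ∧ c u v = i)

/-- The edge relation of the `i`-th monochromatic subgraph `G_{|i}`. -/
def monoEdge {V : Type*} (c : V → V → ℕ) (i : ℕ) : V → V → Prop :=
  fun u v => u ≠ v ∧ c u v = i

/-- The complete edge-colored graph with coloring `c` is a complete edge-colored
permutation graph: there are a labeling `ℓ` and permutations `π i` such that every
monochromatic subgraph `(G_{|i}, ℓ)` is the simple permutation graph of `π i`. -/
def IsCECPG {V : Type*} [Fintype V] (c : V → V → ℕ) : Prop :=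
  ∃ (ℓ : V ≃ Fin (Fintype.card V)) (π : ℕ → Equiv.Perm (Fin (Fintype.card V))),
    ∀ i : ℕ, IsPermGraph (monoEdge c i) ℓ (π i)

/-- `c` contains a rainbow triangle: three vertices whose three connecting edges
have pairwise distinct colors. -/
def HasRainbowTriangle {V : Type*} (c : V → V → ℕ) : Prop :=
  ∃ u v w : V, u ≠ v ∧ u ≠ w ∧ v ≠ w ∧
    c u v ≠ c u w ∧ c u v ≠ c v w ∧ c u w ≠ c v w

/-- `M` is a module of the complete edge-colored graph with coloring `c`. -/
def IsModule {V : Type*} (c : V → V → ℕ) (M : Set V) : Prop :=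
  ∀ u ∈ M, ∀ w ∈ M, ∀ v ∉ M, c u v = c w v

/-- `M` is a strong module: a module that overlaps no other module. -/
def IsStrongModule {V : Type*} (c : V → V → ℕ) (M : Set V) : Prop :=
  IsModule c M ∧ ∀ M' : Set V, IsModule c M' → M ⊆ M' ∨ M' ⊆ M ∨ M ∩ M' = ∅

/-- `N` is a member of `P_max(M)`: a non-empty strong module that is a proper subset
of `M` and is inclusion-maximal among strong modules properly contained in `M`. -/
def PmaxPart {V : Type*} (c : V → V → ℕ) (M N : Set V) : Prop :=
  N.Nonempty ∧ IsStrongModule c N ∧ N ⊂ M ∧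
    ∀ N' : Set V, IsStrongModule c N' → N' ⊂ M → N ⊆ N' → N' = N

/-- The edge relation of the `i`-th monochromatic subgraph of the quotient graph
`G[M]/P_max(M)`: two distinct parts are adjacent with color `i` iff some (equivalently,
by the module property, every) edge between them has color `i`. -/
def quotientMonoEdge {V : Type*} (c : V → V → ℕ) (M : Set V) (i : ℕ) :
    {N : Set V // PmaxPart c M N} → {N : Set V // PmaxPart c M N} → Prop :=
  fun N₁ N₂ => N₁ ≠ N₂ ∧ ∃ u ∈ N₁.1, ∃ v ∈ N₂.1, c u v = i

/-- The quotient graph `G[M]/P_max(M)` is a complete edge-colored permutation graph. -/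
def QuotientIsCECPG {V : Type*} (c : V → V → ℕ) (M : Set V) : Prop :=
  ∃ (m : ℕ) (ℓ : {N : Set V // PmaxPart c M N} ≃ Fin m)
    (π : ℕ → Equiv.Perm (Fin m)),
    ∀ i : ℕ, IsPermGraph (quotientMonoEdge c M i) ℓ (π i)

/-- The strong module `M` (with `|M| ≥ 2`) is series: its quotient graph has at least
two vertices and all its edges carry the same color. -/
def IsSeriesModule {V : Type*} (c : V → V → ℕ) (M : Set V) : Prop :=
  (∃ N₁ N₂ : Set V, PmaxPart c M N₁ ∧ PmaxPart c M N₂ ∧ N₁ ≠ N₂) ∧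
  (∀ N₁ N₂ N₁' N₂' : Set V, PmaxPart c M N₁ → PmaxPart c M N₂ →
    PmaxPart c M N₁' → PmaxPart c M N₂' → N₁ ≠ N₂ → N₁' ≠ N₂' →
    ∀ u v u' v' : V, u ∈ N₁ → v ∈ N₂ → u' ∈ N₁' → v' ∈ N₂' → c u v = c u' v')

/-- The color `i` appears on some edge of the quotient graph `G[M]/P_max(M)`. -/
def QuotientColorAppears {V : Type*} (c : V → V → ℕ) (M : Set V) (i : ℕ) : Prop :=
  ∃ N₁ N₂ : Set V, PmaxPart c M N₁ ∧ PmaxPart c M N₂ ∧ N₁ ≠ N₂ ∧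
    ∃ u ∈ N₁, ∃ v ∈ N₂, c u v = i

/-- Any injective map from a finite type into `Fin n` induces an equivalence with
`Fin (card P)` that preserves the induced relative order. -/
lemma exists_order_equiv {P : Type*} [Fintype P] {n : ℕ} (g : P → Fin n)
    (hg : Function.Injective g) :
    ∃ e : P ≃ Fin (Fintype.card P), ∀ a b : P, e a < e b ↔ g a < g b := by
  classical
  set s : Finset (Fin n) := Finset.univ.image g with hs
  have hcard : s.card = Fintype.card P := by
    rw [hs, Finset.card_image_of_injective _ hg, Finset.card_univ]
  let iso := s.orderIsoOfFin hcard
  have hmem : ∀ a : P, g a ∈ s := fun a => Finset.mem_image_of_mem g (Finset.mem_univ a)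
  let e0 : P → Fin (Fintype.card P) := fun a => iso.symm ⟨g a, hmem a⟩
  have hinj : Function.Injective e0 := by
    intro a b hab
    apply hg
    have h2 := iso.symm.injective hab
    exact congrArg Subtype.val h2
  refine ⟨Equiv.ofBijective e0 ?_, ?_⟩
  · rw [Fintype.bijective_iff_injective_and_card]
    exact ⟨hinj, by simp⟩
  · intro a b
    show e0 a < e0 b ↔ g a < g b
    rw [OrderIso.lt_iff_lt]
    exact Subtype.mk_lt_mk

lemma pmax_disjoint {V : Type*} (c : V → V → ℕ) (M N₁ N₂ : Set V)
    (h₁ : PmaxPart c M N₁) (h₂ : PmaxPart c M N₂) (hne : N₁ ≠ N₂) : N₁ ∩ N₂ = ∅ := by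
  obtain ⟨-, hs₁, hsub₁, hmax₁⟩ := h₁
  obtain ⟨-, hs₂, hsub₂, hmax₂⟩ := h₂
  rcases hs₁.2 N₂ hs₂.1 with h | h | h
  · exact absurd (hmax₁ N₂ hs₂ hsub₂ h) (Ne.symm hne)
  · exact absurd (hmax₂ N₁ hs₁ hsub₁ h) hne
  · exact h

/-- If `G` is a complete edge-colored permutation graph, then for every
strong module `M` of `G` with `|M| ≥ 2` the quotient graph `G[M]/P_max(M)` is a
complete edge-colored permutation graph. -/

theorem stmt12 {V : Type*} [Fintype V] [Nonempty V] (k : ℕ) (c : V → V → ℕ)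
    (hc : IsCompleteColoring k c) (h : IsCECPG c) :
    ∀ M : Set V, IsStrongModule c M → 2 ≤ M.ncard → QuotientIsCECPG c M := by
  classical
  obtain ⟨ℓ, π, hπ⟩ := h
  intro M hM _
  haveI : Fintype {N : Set V // PmaxPart c M N} := Fintype.ofFinite _
  let rep : {N : Set V // PmaxPart c M N} → V := fun N => N.2.1.some
  have hrep : ∀ N, rep N ∈ N.1 := fun N => N.2.1.some_mem
  have hdisj : ∀ N₁ N₂ : {N : Set V // PmaxPart c M N}, N₁ ≠ N₂ → N₁.1 ∩ N₂.1 = ∅ := by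
    intro N₁ N₂ hne
    exact pmax_disjoint c M N₁.1 N₂.1 N₁.2 N₂.2 (fun hh => hne (Subtype.ext hh))
  have hrepne : ∀ N₁ N₂ : {N : Set V // PmaxPart c M N}, N₁ ≠ N₂ → rep N₁ ≠ rep N₂ := by
    intro N₁ N₂ hne heq
    have hmem : rep N₁ ∈ N₁.1 ∩ N₂.1 := ⟨hrep N₁, heq ▸ hrep N₂⟩
    rw [hdisj N₁ N₂ hne] at hmem
    exact hmem
  have hrepinj : Function.Injective rep := by
    intro N₁ N₂ heq
    by_contra hne
    exact hrepne N₁ N₂ hne heq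
  -- color constancy between distinct parts
  have hconst : ∀ N₁ N₂ : {N : Set V // PmaxPart c M N}, N₁ ≠ N₂ →
      ∀ u ∈ N₁.1, ∀ v ∈ N₂.1, c u v = c (rep N₁) (rep N₂) := by
    intro N₁ N₂ hne u hu v hv
    have hd := hdisj N₁ N₂ hne
    have hv1 : v ∉ N₁.1 := fun hvv => by
      have : v ∈ N₁.1 ∩ N₂.1 := ⟨hvv, hv⟩
      rw [hd] at this; exact this
    have hr1 : rep N₁ ∉ N₂.1 := fun hvv => by
      have : rep N₁ ∈ N₁.1 ∩ N₂.1 := ⟨hrep N₁, hvv⟩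
      rw [hd] at this; exact this
    have e1 : c u v = c (rep N₁) v := N₁.2.2.1.1 u hu (rep N₁) (hrep N₁) v hv1
    have e2 : c v (rep N₁) = c (rep N₂) (rep N₁) :=
      N₂.2.2.1.1 v hv (rep N₂) (hrep N₂) (rep N₁) hr1
    rw [e1, hc.1 (rep N₁) v, e2, hc.1 (rep N₂) (rep N₁)]
  let f : {N : Set V // PmaxPart c M N} → Fin (Fintype.card V) := fun N => ℓ (rep N)
  have hf : Function.Injective f := ℓ.injective.comp hrepinj
  obtain ⟨ℓ', hℓ'⟩ := exists_order_equiv f hf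
  have hgi : ∀ i : ℕ, Function.Injective (fun N => (π i)⁻¹ (f N)) :=
    fun i => (π i)⁻¹.injective.comp hf
  choose e he using fun i : ℕ => exists_order_equiv (fun N => (π i)⁻¹ (f N)) (hgi i)
  refine ⟨Fintype.card {N : Set V // PmaxPart c M N}, ℓ',
    fun i => (e i).symm.trans ℓ', ?_⟩
  intro i N₁ N₂
  have hpi : ∀ N, ((e i).symm.trans ℓ' : Equiv.Perm _)⁻¹ (ℓ' N) = e i N := by
    intro N
    rw [Equiv.Perm.inv_def]
    simp
  have hE : quotientMonoEdge c M i N₁ N₂ ↔ monoEdge c i (rep N₁) (rep N₂) := by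
    constructor
    · rintro ⟨hne, u, hu, v, hv, hcv⟩
      exact ⟨hrepne N₁ N₂ hne, by rw [← hconst N₁ N₂ hne u hu v hv, hcv]⟩
    · rintro ⟨hne, hcv⟩
      have hNe : N₁ ≠ N₂ := fun hh => hne (by rw [hh])
      exact ⟨hNe, rep N₁, hrep N₁, rep N₂, hrep N₂, hcv⟩
  show quotientMonoEdge c M i N₁ N₂ ↔ _
  rw [hE, hπ i (rep N₁) (rep N₂), hpi N₁, hpi N₂]
  rw [hℓ' N₂ N₁, hℓ' N₁ N₂, he i N₁ N₂, he i N₂ N₁]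
end

section
/- Let G be a complete edge-colored graph and assume that for every strong prime module M of G with |M| ≥ 2 the quotient graph G[M]/P_max(M) is a complete edge-colored permutation graph. Then G is a complete edge-colored permutation graph. -/
/-! The proof builds a strict total order `<` on the vertices such that along every chain
`u < v < w` the color of `uw` is that of `uv` or of `vw`. It is built bottom-up along the
modular decomposition. In a prime module the labeling of the quotient permutation graph has this
property: if `uw` had a color `i` differing from both, the non-edges `uv` and `vw` of color `i`
would make `uw` a non-edge of `π_i` as well. In a series module every order of the quotient has
it. The order of a strong module is then the lexicographic combination of the order of its
quotient with the orders of its maximal strong submodules, which are modules.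

Reversing such an order `<` on the edges of color `i` gives again a strict total order `<ᵢ`;
labeling by `<` and permuting by `<ᵢ` realises the `i`-th monochromatic subgraph as a
permutation graph. -/

section Modules

variable {V : Type*} {c : V → V → ℕ}

theorem isStrongModule_univ : IsStrongModule c (Set.univ : Set V) :=
  ⟨fun _ _ _ _ v hv => absurd (Set.mem_univ v) hv,
    fun _ _ => Or.inr (Or.inl (Set.subset_univ _))⟩

theorem isStrongModule_singleton (x : V) : IsStrongModule c {x} := by
  refine ⟨fun u hu w hw _ _ => by rw [hu, hw], fun M' _ => ?_⟩
  by_cases hx : x ∈ M'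
  · exact Or.inl (Set.singleton_subset_iff.2 hx)
  · exact Or.inr (Or.inr (Set.singleton_inter_eq_empty.2 hx))

theorem PmaxPart.eq_of_mem {M N₁ N₂ : Set V} (h₁ : PmaxPart c M N₁) (h₂ : PmaxPart c M N₂)
    {x : V} (hx₁ : x ∈ N₁) (hx₂ : x ∈ N₂) : N₁ = N₂ := by
  rcases h₁.2.1.2 N₂ h₂.2.1.1 with h | h | h
  · exact (h₁.2.2.2 N₂ h₂.2.1 h₂.2.2.1 h).symm
  · exact h₂.2.2.2 N₁ h₁.2.1 h₁.2.2.1 h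
  · exact absurd (h ▸ Set.mem_inter hx₁ hx₂) (Set.notMem_empty x)

theorem PmaxPart.color_eq (hsymm : ∀ u v : V, c u v = c v u) {M N₁ N₂ : Set V}
    (h₁ : PmaxPart c M N₁) (h₂ : PmaxPart c M N₂) (hne : N₁ ≠ N₂)
    {u u' v v' : V} (hu : u ∈ N₁) (hu' : u' ∈ N₁) (hv : v ∈ N₂) (hv' : v' ∈ N₂) :
    c u v = c u' v' := by
  have hv₁ : v ∉ N₁ := fun h => hne (h₁.eq_of_mem h₂ h hv)
  have hu₂ : u' ∉ N₂ := fun h => hne (h₁.eq_of_mem h₂ hu' h)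
  calc c u v = c u' v := h₁.2.1.1 u hu u' hu' v hv₁
    _ = c v u' := hsymm _ _
    _ = c v' u' := h₂.2.1.1 v hv v' hv' u' hu₂
    _ = c u' v' := hsymm _ _

theorem exists_pmaxPart_mem [Finite V] {M : Set V} (hM : 2 ≤ M.ncard) {x : V} (hx : x ∈ M) :
    ∃ N, PmaxPart c M N ∧ x ∈ N := by
  let F : Set (Set V) := {S | IsStrongModule c S ∧ x ∈ S ∧ S ⊂ M}
  have hxF : {x} ∈ F := by
    refine ⟨isStrongModule_singleton x, rfl, (Set.singleton_subset_iff.2 hx).ssubset_of_ne ?_⟩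
    rintro rfl
    simp at hM
  obtain ⟨N, ⟨hNs, hxN, hNM⟩, hNmax⟩ := F.toFinite.exists_maximal ⟨_, hxF⟩
  exact ⟨N, ⟨⟨x, hxN⟩, hNs, hNM, fun N' hN's hN'M hNN' =>
    (hNmax ⟨hN's, hNN' hxN, hN'M⟩ hNN').antisymm hNN'⟩, hxN⟩

end Modules

theorem IsPermGraph.adj_or_adj_of_adj {V : Type*} {n : ℕ} {E : V → V → Prop} {ℓ : V ≃ Fin n}
    {π : Equiv.Perm (Fin n)} (h : IsPermGraph E ℓ π) {a b d : V}
    (hab : ℓ a < ℓ b) (hbd : ℓ b < ℓ d) (had : E a d) : E a b ∨ E b d := by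
  by_contra! hnot
  have h₁ : π⁻¹ (ℓ a) ≤ π⁻¹ (ℓ b) := by
    by_contra! hlt
    exact hnot.1 ((h a b).2 (Or.inr ⟨hab, hlt⟩))
  have h₂ : π⁻¹ (ℓ b) ≤ π⁻¹ (ℓ d) := by
    by_contra! hlt
    exact hnot.2 ((h b d).2 (Or.inr ⟨hbd, hlt⟩))
  rcases (h a d).1 had with ⟨hda, -⟩ | ⟨-, hlt⟩
  · exact absurd (hab.trans hbd) hda.not_gt
  · exact absurd (h₁.trans h₂) hlt.not_ge

theorem exists_equiv_fin_lt_iff {α : Type*} [Fintype α] (s : α → α → Prop)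
    [IsStrictTotalOrder α s] :
    ∃ e : α ≃ Fin (Fintype.card α), ∀ a b, s a b ↔ e a < e b := by
  classical
  let := linearOrderOfSTO s
  exact ⟨(Fintype.orderIsoFinOfCardEq α rfl).symm.toEquiv,
    fun a b => (Fintype.orderIsoFinOfCardEq α rfl).symm.lt_iff_lt.symm⟩

section CompatibleOrder

variable {V : Type*} {c : V → V → ℕ}

structure IsCompatibleOrder (c : V → V → ℕ) (r : V → V → Prop) (M : Set V) : Prop where
  irrefl : ∀ x ∈ M, ¬ r x x
  trans : ∀ x ∈ M, ∀ y ∈ M, ∀ z ∈ M, r x y → r y z → r x z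
  total : ∀ x ∈ M, ∀ y ∈ M, x ≠ y → r x y ∨ r y x
  color : ∀ u ∈ M, ∀ v ∈ M, ∀ w ∈ M, r u v → r v w → c u w = c u v ∨ c u w = c v w

theorem IsCompatibleOrder.of_subsingleton {M : Set V} (hM : M.Subsingleton) :
    IsCompatibleOrder c (fun _ _ => False) M where
  irrefl _ _ := id
  trans _ _ _ _ _ _ h := h.elim
  total _ hx _ hy hxy := absurd (hM hx hy) hxy
  color _ _ _ _ _ _ h := h.elim

theorem IsCompatibleOrder.congr {r r' : V → V → Prop} {M : Set V} (h : IsCompatibleOrder c r M)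
    (hr : ∀ x ∈ M, ∀ y ∈ M, r x y ↔ r' x y) : IsCompatibleOrder c r' M where
  irrefl x hx := (hr x hx x hx).not.1 (h.irrefl x hx)
  trans x hx y hy z hz hxy hyz := (hr x hx z hz).1 <|
    h.trans x hx y hy z hz ((hr x hx y hy).2 hxy) ((hr y hy z hz).2 hyz)
  total x hx y hy hxy := (h.total x hx y hy hxy).imp (hr x hx y hy).1 (hr y hy x hx).1
  color u hu v hv w hw huv hvw :=
    h.color u hu v hv w hw ((hr u hu v hv).2 huv) ((hr v hv w hw).2 hvw)

theorem IsCompatibleOrder.lex (hsymm : ∀ u v : V, c u v = c v u) {M : Set V} {κ : V → ℕ}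
    {ρ : V → V → Prop} (hρ : ∀ x ∈ M, IsCompatibleOrder c ρ {y ∈ M | κ y = κ x})
    (hκ : ∀ u ∈ M, ∀ v ∈ M, ∀ w ∈ M, κ u < κ v → κ v < κ w → c u w = c u v ∨ c u w = c v w)
    (hmod : ∀ u ∈ M, ∀ v ∈ M, ∀ w ∈ M, κ u ≠ κ v → κ v = κ w → c u v = c u w) :
    IsCompatibleOrder c (fun x y => κ x < κ y ∨ (κ x = κ y ∧ ρ x y)) M where
  irrefl x hx := by
    rintro (h | ⟨-, h⟩)
    · exact h.false
    · exact (hρ x hx).irrefl x ⟨hx, rfl⟩ h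
  trans x hx y hy z hz := by
    rintro (hxy | ⟨exy, hxy⟩) (hyz | ⟨eyz, hyz⟩)
    · exact Or.inl (hxy.trans hyz)
    · exact Or.inl (eyz ▸ hxy)
    · exact Or.inl (exy ▸ hyz)
    · exact Or.inr ⟨exy.trans eyz, (hρ x hx).trans x ⟨hx, rfl⟩ y ⟨hy, exy.symm⟩
        z ⟨hz, (exy.trans eyz).symm⟩ hxy hyz⟩
  total x hx y hy hxy := by
    rcases lt_trichotomy (κ x) (κ y) with h | h | h
    · exact Or.inl (Or.inl h)
    · exact ((hρ x hx).total x ⟨hx, rfl⟩ y ⟨hy, h.symm⟩ hxy).imp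
        (fun h' => Or.inr ⟨h, h'⟩) (fun h' => Or.inr ⟨h.symm, h'⟩)
    · exact Or.inr (Or.inl h)
  color u hu v hv w hw := by
    rintro (huv | ⟨euv, huv⟩) (hvw | ⟨evw, hvw⟩)
    · exact hκ u hu v hv w hw huv hvw
    · exact Or.inl (hmod u hu v hv w hw huv.ne evw).symm
    · refine Or.inr ?_
      rw [hsymm u w, hsymm v w]
      exact (hmod w hw v hv u hu hvw.ne' euv.symm).symm
    · exact (hρ u hu).color u ⟨hu, rfl⟩ v ⟨hv, euv.symm⟩ w ⟨hw, (euv.trans evw).symm⟩ huv hvw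

end CompatibleOrder

section Decomposition

variable {V : Type*} {c : V → V → ℕ}

theorem exists_compatible_rank_on_pmaxParts [Finite V] (hsymm : ∀ u v : V, c u v = c v u)
    {M : Set V} (hq : ¬ IsSeriesModule c M → QuotientIsCECPG c M) :
    ∃ g : Set V → ℕ, Set.InjOn g {N | PmaxPart c M N} ∧
      ∀ A B C, PmaxPart c M A → PmaxPart c M B → PmaxPart c M C → g A < g B → g B < g C →
        ∀ u ∈ A, ∀ v ∈ B, ∀ w ∈ C, c u w = c u v ∨ c u w = c v w := by
  by_cases hser : IsSeriesModule c M
  · obtain ⟨g, hg⟩ := Countable.exists_injective_nat (Set V)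
    refine ⟨g, hg.injOn, fun A B C hA hB hC hAB hBC u hu v hv w hw => Or.inl ?_⟩
    exact hser.2 A C A B hA hC hA hB (fun h => (h ▸ hAB.trans hBC).false)
      (fun h => (h ▸ hAB).false) u w u v hu hw hu hv
  · classical
    obtain ⟨m, ℓ, π, hπ⟩ := hq hser
    let g : Set V → ℕ := fun N => if h : PmaxPart c M N then ℓ ⟨N, h⟩ else 0
    have hg : ∀ N (h : PmaxPart c M N), g N = ℓ ⟨N, h⟩ := fun N h => dif_pos h
    refine ⟨g, fun A hA B hB h => ?_, fun A B C hA hB hC hAB hBC u hu v hv w hw => ?_⟩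
    · rw [hg A hA, hg B hB] at h
      exact congrArg Subtype.val (ℓ.injective (Fin.ext h))
    rw [hg A hA, hg B hB, Fin.val_fin_lt] at hAB
    rw [hg B hB, hg C hC, Fin.val_fin_lt] at hBC
    have hAC : quotientMonoEdge c M (c u w) ⟨A, hA⟩ ⟨C, hC⟩ :=
      ⟨fun h => (h ▸ hAB.trans hBC).false, u, hu, w, hw, rfl⟩
    rcases (hπ (c u w)).adj_or_adj_of_adj hAB hBC hAC with
      ⟨hne, u', hu', v', hv', h⟩ | ⟨hne, v', hv', w', hw', h⟩
    · exact Or.inl (h ▸ hA.color_eq hsymm hB (fun e => hne (Subtype.ext e)) hu hu' hv hv').symm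
    · exact Or.inr (h ▸ hB.color_eq hsymm hC (fun e => hne (Subtype.ext e)) hv hv' hw hw').symm


theorem exists_isCompatibleOrder_of_pmaxPart [Finite V] (hsymm : ∀ u v : V, c u v = c v u)
    {M : Set V} (hM : 2 ≤ M.ncard) (hq : ¬ IsSeriesModule c M → QuotientIsCECPG c M)
    (hparts : ∀ N, PmaxPart c M N → ∃ r, IsCompatibleOrder c r N) :
    ∃ r, IsCompatibleOrder c r M := by
  choose! P hP using fun x (hx : x ∈ M) => exists_pmaxPart_mem (c := c) hM hx
  choose! R hR using hparts
  obtain ⟨g, hg, hgc⟩ := exists_compatible_rank_on_pmaxParts hsymm hq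
  have hPM : ∀ x ∈ M, P x ⊆ M := fun x hx => (hP x hx).1.2.2.1.1
  have hPmem : ∀ x ∈ M, ∀ y ∈ P x, P y = P x := fun x hx y hy =>
    (hP y (hPM x hx hy)).1.eq_of_mem (hP x hx).1 (hP y (hPM x hx hy)).2 hy
  have hPeq : ∀ x ∈ M, ∀ y ∈ M, g (P x) = g (P y) ↔ y ∈ P x := fun x hx y hy =>
    ⟨fun h => hg (hP x hx).1 (hP y hy).1 h ▸ (hP y hy).2,
      fun h => congrArg g (hPmem x hx y h).symm⟩
  have hfibre : ∀ x ∈ M, {y ∈ M | g (P y) = g (P x)} = P x := fun x hx => by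
    ext y
    exact ⟨fun ⟨hy, h⟩ => (hPeq x hx y hy).1 h.symm,
      fun h => ⟨hPM x hx h, congrArg g (hPmem x hx y h)⟩⟩
  refine ⟨_, IsCompatibleOrder.lex (κ := g ∘ P) (ρ := fun x y => R (P x) x y) hsymm
    (fun x hx => ?_) (fun u hu v hv w hw huv hvw => ?_) (fun u hu v hv w hw huv hvw => ?_)⟩
  · rw [Function.comp_def, hfibre x hx]
    exact (hR _ (hP x hx).1).congr fun y hy z _ => by rw [hPmem x hx y hy]
  · exact hgc _ _ _ (hP u hu).1 (hP v hv).1 (hP w hw).1 huv hvw u (hP u hu).2 v (hP v hv).2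
      w (hP w hw).2
  · have hwv : w ∈ P v := (hPeq v hv w hw).1 hvw
    have huv : u ∉ P v := fun h => huv ((hPeq v hv u hu).2 h).symm
    rw [hsymm u v, hsymm u w]
    exact (hP v hv).1.2.1.1 v (hP v hv).2 w hwv u huv

theorem exists_isCompatibleOrder [Finite V] (hsymm : ∀ u v : V, c u v = c v u)
    (hq : ∀ M : Set V, IsStrongModule c M → 2 ≤ M.ncard → ¬ IsSeriesModule c M →
      QuotientIsCECPG c M)
    (M : Set V) (hM : IsStrongModule c M) : ∃ r, IsCompatibleOrder c r M := by
  induction hn : M.ncard using Nat.strong_induction_on generalizing M with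
  | _ n ih =>
    rcases le_or_gt n 1 with h1 | h2
    · exact ⟨_, .of_subsingleton (Set.ncard_le_one_iff_subsingleton.1 (hn ▸ h1))⟩
    · refine exists_isCompatibleOrder_of_pmaxPart hsymm (hn ▸ h2) (hq M hM (hn ▸ h2))
        fun N hN => ih _ ?_ N hN.2.1 rfl
      exact hn ▸ Set.ncard_lt_ncard hN.2.2.1

end Decomposition

section FlipOrder

variable {V : Type*}

def flipOrder (r E : V → V → Prop) : V → V → Prop :=
  fun u v => (r u v ∧ ¬ E u v) ∨ (r v u ∧ E u v)

theorem isStrictTotalOrder_flipOrder {r E : V → V → Prop} [IsStrictTotalOrder V r]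
    (hE : ∀ x y, E x y → E y x) (h₁ : ∀ x y z, r x y → r y z → E x y → E y z → E x z)
    (h₂ : ∀ x y z, r x y → r y z → E x z → E x y ∨ E y z) :
    IsStrictTotalOrder V (flipOrder r E) where
  trichotomous a b hab hba := by
    rcases trichotomous_of r a b with h | h | h
    · exact absurd (Or.inr ⟨h, hE _ _ (not_not.1 fun hE' => hab (Or.inl ⟨h, hE'⟩))⟩) hba
    · exact h
    · exact absurd (Or.inr ⟨h, hE _ _ (not_not.1 fun hE' => hba (Or.inl ⟨h, hE'⟩))⟩) hab
  irrefl a := by rintro (⟨h, -⟩ | ⟨h, -⟩) <;> exact irrefl a h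
  trans u v w := by
    rintro (⟨huv, euv⟩ | ⟨hvu, euv⟩) (⟨hvw, evw⟩ | ⟨hwv, evw⟩)
    · exact Or.inl ⟨_root_.trans huv hvw, fun e => (h₂ u v w huv hvw e).elim euv evw⟩
    · rcases trichotomous_of r u w with h | rfl | h
      · exact Or.inl ⟨h, fun e => euv (h₁ u w v h hwv e (hE _ _ evw))⟩
      · exact absurd (hE _ _ evw) euv
      · exact Or.inr ⟨h, hE _ _ ((h₂ w u v h huv (hE _ _ evw)).resolve_right euv)⟩
    · rcases trichotomous_of r u w with h | rfl | h
      · exact Or.inl ⟨h, fun e => evw (h₁ v u w hvu h (hE _ _ euv) e)⟩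
      · exact absurd (hE _ _ euv) evw
      · exact Or.inr ⟨h, hE _ _ ((h₂ v w u hvw h (hE _ _ euv)).resolve_left evw)⟩
    · exact Or.inr ⟨_root_.trans hwv hvu, hE _ _ (h₁ w v u hwv hvu (hE _ _ evw) (hE _ _ euv))⟩

theorem isPermGraph_of_flipOrder {n : ℕ} {r E : V → V → Prop} [IsStrictTotalOrder V r]
    (hE : ∀ x y, E x y → E y x) (hEirr : ∀ x, ¬ E x x) {ℓ σ : V ≃ Fin n}
    (hℓ : ∀ u v, r u v ↔ ℓ u < ℓ v) (hσ : ∀ u v, flipOrder r E u v ↔ σ u < σ v) :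
    IsPermGraph E ℓ (σ.symm.trans ℓ) := by
  intro u v
  simp only [Equiv.Perm.inv_def, Equiv.symm_trans_apply, Equiv.symm_symm,
    Equiv.symm_apply_apply, ← hℓ, ← hσ, flipOrder]
  rcases trichotomous_of r u v with h | rfl | h
  · have := asymm h
    have := hE u v
    tauto
  · have := irrefl (r := r) u
    have := hEirr u
    tauto
  · have := asymm h
    have := hE v u
    tauto

end FlipOrder

namespace IsCompatibleOrder

variable {V : Type*} {c : V → V → ℕ} {r : V → V → Prop}

theorem isStrictTotalOrder (hr : IsCompatibleOrder c r Set.univ) : IsStrictTotalOrder V r where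
  trichotomous a b hab hba := by_contra fun hne =>
    (hr.total a trivial b trivial hne).elim hab hba
  irrefl a := hr.irrefl a trivial
  trans a b d := hr.trans a trivial b trivial d trivial

theorem isCECPG [Fintype V] (hsymm : ∀ u v : V, c u v = c v u)
    (hr : IsCompatibleOrder c r Set.univ) : IsCECPG c := by
  have := hr.isStrictTotalOrder
  have hE : ∀ i, ∀ x y, monoEdge c i x y → monoEdge c i y x :=
    fun i x y ⟨hne, h⟩ => ⟨hne.symm, hsymm y x ▸ h⟩
  have hclosed (i : ℕ) (x y z : V) (hxy : r x y) (hyz : r y z) :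
      monoEdge c i x y → monoEdge c i y z → monoEdge c i x z := fun ⟨_, exy⟩ ⟨_, eyz⟩ =>
    ⟨ne_of_irrefl (_root_.trans hxy hyz), by
      rcases hr.color x trivial y trivial z trivial hxy hyz with h | h <;> rw [h] <;> assumption⟩
  have hsplit (i : ℕ) (x y z : V) (hxy : r x y) (hyz : r y z) :
      monoEdge c i x z → monoEdge c i x y ∨ monoEdge c i y z := fun ⟨_, exz⟩ =>
    (hr.color x trivial y trivial z trivial hxy hyz).imp
      (fun h : c x z = c x y => ⟨ne_of_irrefl hxy, h ▸ exz⟩)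
      (fun h : c x z = c y z => ⟨ne_of_irrefl hyz, h ▸ exz⟩)
  have hflip (i : ℕ) : IsStrictTotalOrder V (flipOrder r (monoEdge c i)) :=
    isStrictTotalOrder_flipOrder (hE i) (hclosed i) (hsplit i)
  obtain ⟨ℓ, hℓ⟩ := exists_equiv_fin_lt_iff r
  choose σ hσ using fun i => have := hflip i; exists_equiv_fin_lt_iff (flipOrder r (monoEdge c i))
  exact ⟨ℓ, fun i => (σ i).symm.trans ℓ, fun i =>
    isPermGraph_of_flipOrder (hE i) (fun x h => h.1 rfl) hℓ (hσ i)⟩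

end IsCompatibleOrder

theorem stmt14_general {V : Type*} [Fintype V] (k : ℕ) (c : V → V → ℕ)
    (hc : IsCompleteColoring k c)
    (hq : ∀ M : Set V, IsStrongModule c M → 2 ≤ M.ncard → ¬ IsSeriesModule c M →
      QuotientIsCECPG c M) :
    IsCECPG c := by
  obtain ⟨hsymm, -, -⟩ := hc
  obtain ⟨r, hr⟩ := exists_isCompatibleOrder hsymm hq Set.univ isStrongModule_univ
  exact hr.isCECPG hsymm

/-- If for every strong prime module `M` of `G` with `|M| ≥ 2` the
quotient graph `G[M]/P_max(M)` is a complete edge-colored permutation graph, then `G`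
is a complete edge-colored permutation graph. -/
theorem stmt14 {V : Type*} [Fintype V] [Nonempty V] (k : ℕ) (c : V → V → ℕ)
    (hc : IsCompleteColoring k c)
    (hq : ∀ M : Set V, IsStrongModule c M → 2 ≤ M.ncard → ¬ IsSeriesModule c M →
      QuotientIsCECPG c M) :
    IsCECPG c :=
  stmt14_general k c hc hq
end

section
/- A complete edge-colored graph G is the graph representation of a symbolic ultrametric if and only if G contains no rainbow triangle and every monochromatic subgraph of G is a simple permutation graph of a separable permutation. -/
/-- The permutation `π` is separable: it avoids the patterns 2413 and 3142. -/
def IsSeparablePerm {n : ℕ} (π : Equiv.Perm (Fin n)) : Prop :=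
  (¬ ∃ i₁ i₂ i₃ i₄ : Fin n, i₁ < i₂ ∧ i₂ < i₃ ∧ i₃ < i₄ ∧
      π i₃ < π i₁ ∧ π i₁ < π i₄ ∧ π i₄ < π i₂) ∧
  (¬ ∃ i₁ i₂ i₃ i₄ : Fin n, i₁ < i₂ ∧ i₂ < i₃ ∧ i₃ < i₄ ∧
      π i₂ < π i₄ ∧ π i₄ < π i₁ ∧ π i₁ < π i₃)

namespace SimpleGraph

variable {V : Type*} {G : SimpleGraph V}

def IsInducedP4 (G : SimpleGraph V) (a b c d : V) : Prop :=
  G.Adj a b ∧ G.Adj b c ∧ G.Adj c d ∧ ¬G.Adj a c ∧ ¬G.Adj a d ∧ ¬G.Adj b d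

def IsP4Free (G : SimpleGraph V) : Prop :=
  ∀ a b c d, ¬G.IsInducedP4 a b c d

theorem IsInducedP4.ne {a b c d : V} (h : G.IsInducedP4 a b c d) : a ≠ c ∧ a ≠ d ∧ b ≠ d := by
  obtain ⟨hab, -, hcd, hac, had, -⟩ := h
  refine ⟨?_, ?_, ?_⟩ <;> rintro rfl
  exacts [had hcd, hac hcd.symm, had hab]

theorem IsInducedP4.compl {a b c d : V} (h : G.IsInducedP4 a b c d) : Gᶜ.IsInducedP4 c a d b := by
  obtain ⟨hac, had, hbd⟩ := h.ne
  obtain ⟨hab, hbc, hcd, nac, nad, nbd⟩ := h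
  simp only [IsInducedP4, compl_adj, not_and, not_not]
  exact ⟨⟨hac.symm, fun h => nac h.symm⟩, ⟨had, nad⟩, ⟨hbd.symm, fun h => nbd h.symm⟩,
    fun _ => hcd, fun _ => hbc.symm, fun _ => hab⟩

theorem IsInducedP4.symm {a b c d : V} (h : G.IsInducedP4 a b c d) : G.IsInducedP4 d c b a :=
  ⟨h.2.2.1.symm, h.2.1.symm, h.1.symm, fun h' => h.2.2.2.2.2 h'.symm,
    fun h' => h.2.2.2.2.1 h'.symm, fun h' => h.2.2.2.1 h'.symm⟩

theorem IsP4Free.compl (hG : G.IsP4Free) : Gᶜ.IsP4Free :=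
  fun a b c d h => hG c a d b (compl_compl G ▸ h.compl)

theorem IsP4Free.induce (hG : G.IsP4Free) (s : Set V) : (G.induce s).IsP4Free :=
  fun a b c d h => hG a b c d h

end SimpleGraph

open Function

section InversionGraph

variable {V α β : Type*} [LinearOrder α] [LinearOrder β]

def IsInversionGraph (E : V → V → Prop) (val pos : V → α) : Prop :=
  ∀ u v, E u v ↔ ((val v < val u ∧ pos u < pos v) ∨ (val u < val v ∧ pos v < pos u))

def Forms2413Or3142 (val pos : V → α) (a b c d : V) : Prop :=
  pos a < pos b ∧ pos b < pos c ∧ pos c < pos d ∧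
    ((val c < val a ∧ val a < val d ∧ val d < val b) ∨
      (val b < val d ∧ val d < val a ∧ val a < val c))

def Contains2413Or3142 (val pos : V → α) : Prop :=
  ∃ a b c d, Forms2413Or3142 val pos a b c d

variable {E : V → V → Prop} {G : SimpleGraph V} {val pos : V → α} {val' pos' : V → β}

theorem isInversionGraph_congr (hv : ∀ x y, val x < val y ↔ val' x < val' y)
    (hp : ∀ x y, pos x < pos y ↔ pos' x < pos' y) :
    IsInversionGraph E val pos ↔ IsInversionGraph E val' pos' := by
  simp only [IsInversionGraph, hv, hp]

theorem forms2413Or3142_congr (hv : ∀ x y, val x < val y ↔ val' x < val' y)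
    (hp : ∀ x y, pos x < pos y ↔ pos' x < pos' y) {a b c d : V} :
    Forms2413Or3142 val pos a b c d ↔ Forms2413Or3142 val' pos' a b c d := by
  simp only [Forms2413Or3142, hv, hp]

theorem contains2413Or3142_congr (hv : ∀ x y, val x < val y ↔ val' x < val' y)
    (hp : ∀ x y, pos x < pos y ↔ pos' x < pos' y) :
    Contains2413Or3142 val pos ↔ Contains2413Or3142 val' pos' := by
  simp only [Contains2413Or3142, forms2413Or3142_congr hv hp]

theorem IsInversionGraph.agree_of_not (h : IsInversionGraph E val pos) (hv : Injective val)
    (hp : Injective pos) {u v : V} (huv : u ≠ v) (hn : ¬E u v) :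
    (val u < val v ∧ pos u < pos v) ∨ (val v < val u ∧ pos v < pos u) := by
  rw [h] at hn
  rcases lt_or_gt_of_ne (hv.ne huv) with h₁ | h₁ <;>
    rcases lt_or_gt_of_ne (hp.ne huv) with h₂ | h₂
  · exact Or.inl ⟨h₁, h₂⟩
  · exact absurd (Or.inr ⟨h₁, h₂⟩) hn
  · exact absurd (Or.inl ⟨h₁, h₂⟩) hn
  · exact Or.inr ⟨h₁, h₂⟩

theorem IsInversionGraph.contains2413Or3142 (h : IsInversionGraph G.Adj val pos)
    (hv : Injective val) (hp : Injective pos) {a b c d : V} (hP4 : G.IsInducedP4 a b c d) :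
    Contains2413Or3142 val pos := by
  -- Non-adjacent vertices are comparable in both orders. Once `a` lies below `d`, also `a` lies
  -- below `c` and `b` below `d`, and the orientation of the edge `bc` decides between 3142 on
  -- `b a d c` and 2413 on `a c b d`.
  obtain ⟨hac, had, hbd⟩ := hP4.ne
  wlog had' : val a < val d ∧ pos a < pos d generalizing a b c d
  · obtain ⟨hda, hdb, hca⟩ := hP4.symm.ne
    exact this hP4.symm hda hdb hca ((h.agree_of_not hv hp had hP4.2.2.2.2.1).resolve_left had')
  obtain ⟨hab, hbc, hcd, nac, -, nbd⟩ := hP4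
  rw [h] at hab hbc hcd
  have hac' : val a < val c ∧ pos a < pos c :=
    (h.agree_of_not hv hp hac nac).resolve_right fun hca =>
      hcd.elim (fun h' => (h'.1.trans (hca.1.trans had'.1)).false)
        (fun h' => (h'.2.trans (hca.2.trans had'.2)).false)
  have hbd' : val b < val d ∧ pos b < pos d :=
    (h.agree_of_not hv hp hbd nbd).resolve_right fun hdb =>
      hab.elim (fun h' => (h'.1.trans (had'.1.trans hdb.1)).false)
        (fun h' => (h'.2.trans (had'.2.trans hdb.2)).false)
  rcases hbc with ⟨hcb, hbc⟩ | ⟨hbc, hcb⟩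
  · obtain ⟨-, hba⟩ := hab.resolve_left fun h' => (h'.1.trans (hac'.1.trans hcb)).false
    obtain ⟨-, hdc⟩ := hcd.resolve_left fun h' => (h'.1.trans (hcb.trans hbd'.1)).false
    exact ⟨b, a, d, c, hba, had'.2, hdc, Or.inr ⟨hac'.1, hcb, hbd'.1⟩⟩
  · obtain ⟨hba, -⟩ := hab.resolve_right fun h' => (h'.2.trans (hac'.2.trans hcb)).false
    obtain ⟨hdc, -⟩ := hcd.resolve_right fun h' => (h'.2.trans (hcb.trans hbd'.2)).false
    exact ⟨a, c, b, d, hac'.2, hcb, hbd'.2, Or.inl ⟨hba, had'.1, hdc⟩⟩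

theorem IsInversionGraph.adj_of_forms2413Or3142 (h : IsInversionGraph E val pos) {a b c d : V}
    (hf : Forms2413Or3142 val pos a b c d) :
    (E a c ∧ E c b ∧ E b d) ∨ (E b a ∧ E a d ∧ E d c) := by
  obtain ⟨hab, hbc, hcd, ⟨hca, had, hdb⟩ | ⟨hbd, hda, hac⟩⟩ := hf
  · exact Or.inl ⟨(h a c).2 (Or.inl ⟨hca, hab.trans hbc⟩),
      (h c b).2 (Or.inr ⟨hca.trans (had.trans hdb), hbc⟩), (h b d).2 (Or.inl ⟨hdb, hbc.trans hcd⟩)⟩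
  · exact Or.inr ⟨(h b a).2 (Or.inr ⟨hbd.trans hda, hab⟩),
      (h a d).2 (Or.inl ⟨hda, hab.trans (hbc.trans hcd)⟩), (h d c).2 (Or.inr ⟨hda.trans hac, hcd⟩)⟩

theorem IsInversionGraph.isP4Free (h : IsInversionGraph G.Adj val pos) (hv : Injective val)
    (hp : Injective pos) (hpat : ¬Contains2413Or3142 val pos) : G.IsP4Free :=
  fun _ _ _ _ hP4 => hpat (h.contains2413Or3142 hv hp hP4)

theorem isPermGraph_iff_isInversionGraph {n : ℕ} (ℓ : V ≃ Fin n) (π : Equiv.Perm (Fin n)) :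
    IsPermGraph E ℓ π ↔ IsInversionGraph E ℓ (⇑π⁻¹ ∘ ℓ) :=
  Iff.rfl

theorem isSeparablePerm_iff_not_contains2413Or3142 {n : ℕ} (ℓ : V ≃ Fin n)
    (π : Equiv.Perm (Fin n)) : IsSeparablePerm π ↔ ¬Contains2413Or3142 ℓ (⇑π⁻¹ ∘ ℓ) := by
  rw [IsSeparablePerm, ← not_or]
  refine not_congr ⟨?_, ?_⟩
  · rintro (⟨i₁, i₂, i₃, i₄, h⟩ | ⟨i₁, i₂, i₃, i₄, h⟩) <;>
      refine ⟨ℓ.symm (π i₁), ℓ.symm (π i₂), ℓ.symm (π i₃), ℓ.symm (π i₄), ?_⟩ <;>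
      simp [Forms2413Or3142, h]
  · rintro ⟨a, b, c, d, h₁, h₂, h₃, h | h⟩
    · left
      exact ⟨π⁻¹ (ℓ a), π⁻¹ (ℓ b), π⁻¹ (ℓ c), π⁻¹ (ℓ d), h₁, h₂, h₃, by simpa using h⟩
    · right
      exact ⟨π⁻¹ (ℓ a), π⁻¹ (ℓ b), π⁻¹ (ℓ c), π⁻¹ (ℓ d), h₁, h₂, h₃, by simpa using h⟩

theorem exists_equiv_fin_lt_iff_s18 [Fintype V] {f : V → α} (hf : Injective f) :
    ∃ e : V ≃ Fin (Fintype.card V), ∀ x y, e x < e y ↔ f x < f y := by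
  let := LinearOrder.lift' f hf
  exact ⟨(Fintype.orderIsoFinOfCardEq V rfl).symm.toEquiv,
    fun _ _ => (Fintype.orderIsoFinOfCardEq V rfl).symm.lt_iff_lt⟩

theorem IsInversionGraph.exists_isPermGraph [Fintype V] (h : IsInversionGraph E val pos)
    (hv : Injective val) (hp : Injective pos) (hpat : ¬Contains2413Or3142 val pos) :
    ∃ (ℓ : V ≃ Fin (Fintype.card V)) (π : Equiv.Perm (Fin (Fintype.card V))),
      IsPermGraph E ℓ π ∧ IsSeparablePerm π := by
  obtain ⟨ℓ, hℓ⟩ := exists_equiv_fin_lt_iff_s18 hv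
  obtain ⟨σ, hσ⟩ := exists_equiv_fin_lt_iff_s18 hp
  have hπ : ⇑(σ.symm.trans ℓ : Equiv.Perm _)⁻¹ ∘ ℓ = σ := by
    funext v
    simp [Equiv.Perm.inv_def]
  refine ⟨ℓ, σ.symm.trans ℓ, ?_, ?_⟩
  · rwa [isPermGraph_iff_isInversionGraph, hπ, isInversionGraph_congr hℓ hσ]
  · rwa [isSeparablePerm_iff_not_contains2413Or3142 ℓ, hπ, contains2413Or3142_congr hℓ hσ]

theorem IsPermGraph.isP4Free {n : ℕ} {ℓ : V ≃ Fin n} {π : Equiv.Perm (Fin n)}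
    (h : IsPermGraph G.Adj ℓ π) (hπ : IsSeparablePerm π) : G.IsP4Free :=
  IsInversionGraph.isP4Free h ℓ.injective (π⁻¹.injective.comp ℓ.injective)
    ((isSeparablePerm_iff_not_contains2413Or3142 ℓ π).1 hπ)

end InversionGraph

theorem exists_injective_stack {V : Type*} [Finite V] {s : Set V} {f : s → ℤ} {g : ↥sᶜ → ℤ}
    (hf : Injective f) (hg : Injective g) :
    ∃ h : V → ℤ, Injective h ∧ (∀ x y : s, h x < h y ↔ f x < f y) ∧
      (∀ x y : ↥sᶜ, h x < h y ↔ g x < g y) ∧ ∀ (x : s) (y : ↥sᶜ), h x < h y := by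
  classical
  obtain ⟨M, hM⟩ := Finite.exists_le f
  obtain ⟨N, hN⟩ := Finite.exists_ge g
  set h : V → ℤ := fun v => if hv : v ∈ s then f ⟨v, hv⟩ else g ⟨v, hv⟩ + (M - N + 1)
  have hs : ∀ x : s, h x = f x := fun x => dif_pos x.2
  have hsc : ∀ y : ↥sᶜ, h y = g y + (M - N + 1) := fun y => dif_neg y.2
  have hlt : ∀ (x : s) (y : ↥sᶜ), h x < h y := fun x y => by
    rw [hs, hsc]; linarith [hM x, hN y]
  refine ⟨h, fun u v huv => ?_, fun x y => by rw [hs, hs],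
    fun x y => by rw [hsc, hsc, add_lt_add_iff_right], hlt⟩
  by_cases hu : u ∈ s <;> by_cases hv : v ∈ s
  · exact congrArg Subtype.val (@hf ⟨u, hu⟩ ⟨v, hv⟩
      ((hs ⟨u, hu⟩).symm.trans (huv.trans (hs ⟨v, hv⟩))))
  · exact absurd huv (hlt ⟨u, hu⟩ ⟨v, hv⟩).ne
  · exact absurd huv (hlt ⟨v, hv⟩ ⟨u, hu⟩).ne'
  · exact congrArg Subtype.val (@hg ⟨u, hu⟩ ⟨v, hv⟩
      (add_right_cancel ((hsc ⟨u, hu⟩).symm.trans (huv.trans (hsc ⟨v, hv⟩)))))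

namespace SimpleGraph

variable {V : Type*} {G : SimpleGraph V}

def HasSeparableRealizer (G : SimpleGraph V) : Prop :=
  ∃ val pos : V → ℤ, Injective val ∧ Injective pos ∧ IsInversionGraph G.Adj val pos ∧
    ¬Contains2413Or3142 val pos

theorem hasSeparableRealizer_of_subsingleton [Subsingleton V] (G : SimpleGraph V) :
    G.HasSeparableRealizer :=
  ⟨0, 0, injective_of_subsingleton _, injective_of_subsingleton _,
    fun u v => iff_of_false (fun h => h.ne (Subsingleton.elim u v)) (by simp),
    fun ⟨_, _, _, _, h, _⟩ => h.false⟩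

theorem HasSeparableRealizer.compl (hG : G.HasSeparableRealizer) : Gᶜ.HasSeparableRealizer := by
  obtain ⟨val, pos, hv, hp, h, hpat⟩ := hG
  refine ⟨val, -pos, hv, neg_injective.comp hp, fun u v => ?_, ?_⟩
  · rw [compl_adj, h]
    simp only [Pi.neg_apply, neg_lt_neg_iff]
    rcases eq_or_ne u v with rfl | huv
    · simp
    · have := hv.ne huv
      have := hp.ne huv
      simp only [ne_eq, huv, not_false_eq_true, true_and]
      omega
  · rintro ⟨a, b, c, d, hf⟩
    simp only [Forms2413Or3142, Pi.neg_apply, neg_lt_neg_iff] at hf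
    exact hpat ⟨d, c, b, a, hf.2.2.1, hf.2.1, hf.1, hf.2.2.2.symm⟩

theorem HasSeparableRealizer.of_forall_not_adj [Finite V] {s : Set V}
    (hs : (G.induce s).HasSeparableRealizer) (hsc : (G.induce sᶜ).HasSeparableRealizer)
    (hcross : ∀ u ∈ s, ∀ v ∉ s, ¬G.Adj u v) : G.HasSeparableRealizer := by
  obtain ⟨vA, pA, hvA, hpA, hA, patA⟩ := hs
  obtain ⟨vB, pB, hvB, hpB, hB, patB⟩ := hsc
  obtain ⟨val, hv, hvA', hvB', hvAB⟩ := exists_injective_stack hvA hvB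
  obtain ⟨pos, hp, hpA', hpB', hpAB⟩ := exists_injective_stack hpA hpB
  rw [← isInversionGraph_congr hvA' hpA'] at hA
  rw [← isInversionGraph_congr hvB' hpB'] at hB
  have hinv : IsInversionGraph G.Adj val pos := fun u v => by
    by_cases hu : u ∈ s <;> by_cases hv : v ∈ s
    · exact hA ⟨u, hu⟩ ⟨v, hv⟩
    · refine iff_of_false (hcross u hu v hv) ?_
      rintro (⟨h, -⟩ | ⟨-, h⟩)
      exacts [lt_asymm h (hvAB ⟨u, hu⟩ ⟨v, hv⟩), lt_asymm h (hpAB ⟨u, hu⟩ ⟨v, hv⟩)]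
    · refine iff_of_false (fun h => hcross v hv u hu h.symm) ?_
      rintro (⟨-, h⟩ | ⟨h, -⟩)
      exacts [lt_asymm h (hpAB ⟨v, hv⟩ ⟨u, hu⟩), lt_asymm h (hvAB ⟨v, hv⟩ ⟨u, hu⟩)]
    · exact hB ⟨u, hu⟩ ⟨v, hv⟩
  have hside : ∀ u v, G.Adj u v → (u ∈ s ↔ v ∈ s) := fun u v h =>
    ⟨fun hu => by_contra fun hv => hcross u hu v hv h,
      fun hv => by_contra fun hu => hcross v hv u hu h.symm⟩
  refine ⟨val, pos, hv, hp, hinv, fun ⟨a, b, c, d, hf⟩ => ?_⟩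
  have hsame : (a ∈ s ↔ b ∈ s) ∧ (a ∈ s ↔ c ∈ s) ∧ (a ∈ s ↔ d ∈ s) := by
    rcases hinv.adj_of_forms2413Or3142 hf with ⟨h₁, h₂, h₃⟩ | ⟨h₁, h₂, h₃⟩ <;>
      have := hside _ _ h₁ <;> have := hside _ _ h₂ <;> have := hside _ _ h₃ <;> tauto
  by_cases ha : a ∈ s
  · exact patA ⟨⟨a, ha⟩, ⟨b, hsame.1.1 ha⟩, ⟨c, hsame.2.1.1 ha⟩, ⟨d, hsame.2.2.1 ha⟩,
      (forms2413Or3142_congr hvA' hpA').1 hf⟩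
  · exact patB ⟨⟨a, ha⟩, ⟨b, mt hsame.1.2 ha⟩, ⟨c, mt hsame.2.1.2 ha⟩, ⟨d, mt hsame.2.2.2 ha⟩,
      (forms2413Or3142_congr hvB' hpB').1 hf⟩

def IsSeparation (G : SimpleGraph V) (s : Set V) : Prop :=
  s.Nonempty ∧ sᶜ.Nonempty ∧ ∀ u ∈ s, ∀ v ∉ s, ¬G.Adj u v

theorem compl_induce (G : SimpleGraph V) (s : Set V) : (G.induce s)ᶜ = Gᶜ.induce s := by
  ext x y
  simp [Subtype.ext_iff]

theorem isSeparation_singleton [Nontrivial V] {v₀ : V} (h : ∀ w, ¬G.Adj v₀ w) :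
    G.IsSeparation {v₀} :=
  ⟨Set.singleton_nonempty v₀, exists_ne v₀, by rintro u rfl w -; exact h w⟩

theorem isSeparation_compl_singleton [Nontrivial V] {v₀ : V} (h : ∀ w ≠ v₀, G.Adj v₀ w) :
    Gᶜ.IsSeparation {v₀} :=
  isSeparation_singleton fun w hw => by
    rw [compl_adj] at hw
    exact hw.2 (h w hw.1.symm)

theorem IsP4Free.not_adj_of_not_adj_of_adj (hG : G.IsP4Free) {v₀ a b : V} {s : Set V}
    (hcross : ∀ u ∈ s, ∀ w ≠ v₀, w ∉ s → ¬G.Adj u w) (has : a ∈ s) (hb₀ : b ≠ v₀) (hbs : b ∉ s)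
    (hva : G.Adj v₀ a) (hvb : G.Adj v₀ b) {u x : V} (hu₀ : u ≠ v₀) (hvu : ¬G.Adj v₀ u)
    (hx₀ : x ≠ v₀) (hvx : G.Adj v₀ x) : ¬G.Adj u x := by
  intro hux
  by_cases hus : u ∈ s
  · have hxs : x ∈ s := by_contra fun hxs => hcross u hus x hx₀ hxs hux
    exact hG u x v₀ b ⟨hux, hvx.symm, hvb, fun h => hvu h.symm, hcross u hus b hb₀ hbs,
      hcross x hxs b hb₀ hbs⟩
  · have hxs : x ∉ s := fun hxs => hcross x hxs u hu₀ hus hux.symm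
    exact hG u x v₀ a ⟨hux, hvx.symm, hva, fun h => hvu h.symm,
      fun h => hcross a has u hu₀ hus h.symm, fun h => hcross a has x hx₀ hxs h.symm⟩

theorem IsP4Free.exists_isSeparation_of_forall_not_adj (hG : G.IsP4Free) {v₀ : V} {s : Set V}
    (hv₀ : v₀ ∉ s) (hs : s.Nonempty) (ht : ∃ w ≠ v₀, w ∉ s)
    (hcross : ∀ u ∈ s, ∀ w ≠ v₀, w ∉ s → ¬G.Adj u w) :
    (∃ t, G.IsSeparation t) ∨ ∃ t, Gᶜ.IsSeparation t := by
  obtain ⟨b₀, hb₀, hb₀s⟩ := ht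
  by_cases hA : ∀ a ∈ s, ¬G.Adj v₀ a
  · refine Or.inl ⟨s, hs, ⟨v₀, hv₀⟩, fun u hu w hw => ?_⟩
    rcases eq_or_ne w v₀ with rfl | hw₀
    · exact fun h => hA u hu h.symm
    · exact hcross u hu w hw₀ hw
  by_cases hB : ∀ b ≠ v₀, b ∉ s → ¬G.Adj v₀ b
  · refine Or.inl ⟨{b | b ≠ v₀ ∧ b ∉ s}, ⟨b₀, hb₀, hb₀s⟩, ⟨v₀, fun h => h.1 rfl⟩,
      fun u ⟨hu₀, hus⟩ w hw => ?_⟩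
    rcases eq_or_ne w v₀ with rfl | hw₀
    · exact fun h => hB u hu₀ hus h.symm
    · have hws : w ∈ s := by_contra fun hws => hw ⟨hw₀, hws⟩
      exact fun h => hcross w hws u hu₀ hus h.symm
  push Not at hA hB
  obtain ⟨a, has, hva⟩ := hA
  obtain ⟨b, hb₀, hbs, hvb⟩ := hB
  have : Nontrivial V := ⟨⟨b, v₀, hb₀⟩⟩
  by_cases hall : ∀ w ≠ v₀, G.Adj v₀ w
  · exact Or.inr ⟨{v₀}, isSeparation_compl_singleton hall⟩
  push Not at hall
  obtain ⟨w₀, hw₀, hvw₀⟩ := hall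
  refine Or.inl ⟨{w | w ≠ v₀ ∧ ¬G.Adj v₀ w}, ⟨w₀, hw₀, hvw₀⟩, ⟨v₀, fun h => h.1 rfl⟩,
    fun u ⟨hu₀, hvu⟩ x hx => ?_⟩
  rcases eq_or_ne x v₀ with rfl | hx₀
  · exact fun h => hvu h.symm
  · exact hG.not_adj_of_not_adj_of_adj hcross has hb₀ hbs hva hvb hu₀ hvu hx₀
      (by_contra fun h => hx ⟨hx₀, h⟩)

theorem IsP4Free.exists_isSeparation_of_isSeparation_induce (hG : G.IsP4Free) {v₀ : V}
    {q : Set ↥({v₀}ᶜ : Set V)} (hq : (G.induce {v₀}ᶜ).IsSeparation q) :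
    (∃ t, G.IsSeparation t) ∨ ∃ t, Gᶜ.IsSeparation t := by
  obtain ⟨⟨a, ha⟩, ⟨b, hb⟩, hcross⟩ := hq
  refine hG.exists_isSeparation_of_forall_not_adj (s := (↑) '' q) ?_ ⟨a, a, ha, rfl⟩
    ⟨b, b.2, fun h => hb (Subtype.val_injective.mem_set_image.1 h)⟩ ?_
  · rintro ⟨x, -, hx⟩
    exact x.2 hx
  · rintro _ ⟨x, hx, rfl⟩ w hw hws
    exact hcross x hx ⟨w, hw⟩ fun h => hws ⟨_, h, rfl⟩

theorem IsP4Free.exists_isSeparation [Finite V] [Nontrivial V] (hG : G.IsP4Free) :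
    (∃ s, G.IsSeparation s) ∨ ∃ s, Gᶜ.IsSeparation s := by
  induction h : Nat.card V using Nat.strong_induction_on generalizing V with
  | _ n ih =>
  obtain ⟨v₀⟩ : Nonempty V := inferInstance
  rcases subsingleton_or_nontrivial ↥({v₀}ᶜ : Set V) with hW | hW
  · obtain ⟨w₀, hw₀⟩ := exists_ne v₀
    have hW : ∀ w ≠ v₀, w = w₀ := fun w hw =>
      congrArg Subtype.val (Subsingleton.elim (⟨w, hw⟩ : ↥({v₀}ᶜ : Set V)) ⟨w₀, hw₀⟩)
    by_cases hadj : G.Adj v₀ w₀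
    · exact Or.inr ⟨{v₀}, isSeparation_compl_singleton fun w hw => hW w hw ▸ hadj⟩
    · exact Or.inl ⟨{v₀}, isSeparation_singleton fun w hw => hadj (hW w hw.ne' ▸ hw)⟩
  · have hcard : Nat.card ↥({v₀}ᶜ : Set V) < n := h ▸ Finite.card_subtype_lt (x := v₀) (by simp)
    rcases ih _ hcard (hG.induce _) rfl with ⟨q, hq⟩ | ⟨q, hq⟩
    · exact hG.exists_isSeparation_of_isSeparation_induce hq
    · rw [compl_induce] at hq
      simpa [or_comm] using hG.compl.exists_isSeparation_of_isSeparation_induce hq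

theorem IsP4Free.hasSeparableRealizer [Finite V] (hG : G.IsP4Free) : G.HasSeparableRealizer := by
  induction h : Nat.card V using Nat.strong_induction_on generalizing V with
  | _ n ih =>
  rcases subsingleton_or_nontrivial V with _ | _
  · exact hasSeparableRealizer_of_subsingleton G
  have of_isSeparation : ∀ {H : SimpleGraph V} {s : Set V}, H.IsSeparation s → H.IsP4Free →
      H.HasSeparableRealizer := fun ⟨⟨a, ha⟩, ⟨b, hb⟩, hcross⟩ hH =>
    HasSeparableRealizer.of_forall_not_adj
      (ih _ (h ▸ Finite.card_subtype_lt (x := b) hb) (hH.induce _) rfl)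
      (ih _ (h ▸ Finite.card_subtype_lt (x := a) (not_not_intro ha)) (hH.induce _) rfl) hcross
  rcases hG.exists_isSeparation with ⟨s, hs⟩ | ⟨s, hs⟩
  · exact of_isSeparation hs hG
  · simpa using (of_isSeparation hs hG.compl).compl

theorem exists_isPermGraph_iff_isP4Free [Fintype V] (G : SimpleGraph V) :
    (∃ (ℓ : V ≃ Fin (Fintype.card V)) (π : Equiv.Perm (Fin (Fintype.card V))),
      IsPermGraph G.Adj ℓ π ∧ IsSeparablePerm π) ↔ G.IsP4Free := by
  refine ⟨fun ⟨_, _, h, hπ⟩ => h.isP4Free hπ, fun hG => ?_⟩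
  obtain ⟨_, _, hv, hp, h, hpat⟩ := hG.hasSeparableRealizer
  exact h.exists_isPermGraph hv hp hpat

end SimpleGraph

section Coloring

variable {V : Type*} {c : V → V → ℕ}

def monoGraph (c : V → V → ℕ) (hc : ∀ u v, c u v = c v u) (i : ℕ) : SimpleGraph V where
  Adj := monoEdge c i
  symm := ⟨fun _ _ h => ⟨h.1.symm, (hc _ _).trans h.2⟩⟩
  loopless := ⟨fun _ h => h.1 rfl⟩

theorem monoGraph_adj {hc : ∀ u v, c u v = c v u} {i : ℕ} {u v : V} :
    (monoGraph c hc i).Adj u v ↔ u ≠ v ∧ c u v = i :=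
  Iff.rfl

/-- The configuration excluded by (U3). -/
def HasTwoColoredP4 (c : V → V → ℕ) : Prop :=
  ∃ x y u v : V, x ≠ y ∧ x ≠ u ∧ x ≠ v ∧ y ≠ u ∧ y ≠ v ∧ u ≠ v ∧
    c x y = c y u ∧ c y u = c u v ∧ c x y ≠ c v y ∧ c v y = c x v ∧ c x v = c x u

theorem not_hasRainbowTriangle_iff :
    ¬HasRainbowTriangle c ↔ ∀ x y z : V, x ≠ y → x ≠ z → y ≠ z →
      c x y = c x z ∨ c x y = c y z ∨ c x z = c y z := by
  simp only [HasRainbowTriangle, not_exists, not_and]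
  refine forall₃_congr fun x y z => imp_congr_right fun _ => imp_congr_right fun _ =>
    imp_congr_right fun _ => ?_
  tauto

theorem isP4Free_monoGraph (hc : ∀ u v, c u v = c v u) (hU2 : ¬HasRainbowTriangle c)
    (hU3 : ¬HasTwoColoredP4 c) (i : ℕ) : (monoGraph c hc i).IsP4Free := by
  intro x y u v hP4
  obtain ⟨hxu, hxv, hyv⟩ := hP4.ne
  obtain ⟨hxy, hyu, huv, nxu, nxv, nyv⟩ := hP4
  simp only [monoGraph_adj] at hxy hyu huv nxu nxv nyv
  replace nxu : c x u ≠ i := fun h => nxu ⟨hxu, h⟩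
  replace nxv : c x v ≠ i := fun h => nxv ⟨hxv, h⟩
  replace nyv : c y v ≠ i := fun h => nyv ⟨hyv, h⟩
  rw [not_hasRainbowTriangle_iff] at hU2
  have hxuv : c x u = c x v := by
    rcases hU2 x u v hxu hxv huv.1 with h | h | h
    exacts [h, absurd (h.trans huv.2) nxu, absurd (h.trans huv.2) nxv]
  have hxyv : c x v = c y v := by
    rcases hU2 x y v hxy.1 hxv hyv with h | h | h
    exacts [absurd (h.symm.trans hxy.2) nxv, absurd (h.symm.trans hxy.2) nyv, h]
  refine hU3 ⟨x, y, u, v, hxy.1, hxu, hxv, hyu.1, hyv, huv.1, hxy.2.trans hyu.2.symm,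
    hyu.2.trans huv.2.symm, ?_, (hc v y).trans hxyv.symm, hxuv.symm⟩
  rw [hxy.2, hc v y]
  exact nyv.symm

theorem not_hasTwoColoredP4 {k : ℕ} (hc : IsCompleteColoring k c)
    (h : ∀ i ∈ Finset.Icc 1 k, (monoGraph c hc.1 i).IsP4Free) : ¬HasTwoColoredP4 c := by
  rintro ⟨x, y, u, v, hxy, hxu, hxv, hyu, hyv, huv, h₁, h₂, h₃, h₄, h₅⟩
  exact h (c x y) (hc.2.1 x y hxy) x y u v ⟨⟨hxy, rfl⟩, ⟨hyu, h₁.symm⟩, ⟨huv, (h₁.trans h₂).symm⟩,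
    fun h => h₃ (h.2.symm.trans (h₅.symm.trans h₄.symm)), fun h => h₃ (h.2.symm.trans h₄.symm),
    fun h => h₃ (h.2.symm.trans (hc.1 y v))⟩

end Coloring

theorem stmt18_general {V : Type*} [Fintype V] (k : ℕ) (c : V → V → ℕ)
    (hc : IsCompleteColoring k c) :
    ((∀ x y z : V, x ≠ y → x ≠ z → y ≠ z →
        c x y = c x z ∨ c x y = c y z ∨ c x z = c y z) ∧
     (¬ ∃ x y u v : V, x ≠ y ∧ x ≠ u ∧ x ≠ v ∧ y ≠ u ∧ y ≠ v ∧ u ≠ v ∧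
        c x y = c y u ∧ c y u = c u v ∧ c x y ≠ c v y ∧ c v y = c x v ∧ c x v = c x u))
    ↔
    (¬ HasRainbowTriangle c ∧
      ∀ i ∈ Finset.Icc 1 k,
        ∃ (ℓᵢ : V ≃ Fin (Fintype.card V)) (πᵢ : Equiv.Perm (Fin (Fintype.card V))),
          IsPermGraph (monoEdge c i) ℓᵢ πᵢ ∧ IsSeparablePerm πᵢ) := by
  rw [← not_hasRainbowTriangle_iff]
  refine and_congr_right fun hU2 =>
    ⟨fun hU3 i _ => ?_, fun h => not_hasTwoColoredP4 hc fun i hi => ?_⟩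
  · exact (monoGraph c hc.1 i).exists_isPermGraph_iff_isP4Free.2
      (isP4Free_monoGraph hc.1 hU2 hU3 i)
  · exact (monoGraph c hc.1 i).exists_isPermGraph_iff_isP4Free.1 (h i hi)

/-- A complete `k`-edge-colored graph `G` is the graph representation of
a symbolic ultrametric (i.e. its coloring satisfies (U2) and (U3)) if and only if `G`
contains no rainbow triangle and every monochromatic subgraph of `G` is a simple
permutation graph of a separable permutation. -/
theorem stmt18 {V : Type*} [Fintype V] (k : ℕ) (c : V → V → ℕ)
    (hcard : 2 ≤ Fintype.card V) (hc : IsCompleteColoring k c) :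
    ((∀ x y z : V, x ≠ y → x ≠ z → y ≠ z →
        c x y = c x z ∨ c x y = c y z ∨ c x z = c y z) ∧
     (¬ ∃ x y u v : V, x ≠ y ∧ x ≠ u ∧ x ≠ v ∧ y ≠ u ∧ y ≠ v ∧ u ≠ v ∧
        c x y = c y u ∧ c y u = c u v ∧ c x y ≠ c v y ∧ c v y = c x v ∧ c x v = c x u))
    ↔
    (¬ HasRainbowTriangle c ∧
      ∀ i ∈ Finset.Icc 1 k,
        ∃ (ℓᵢ : V ≃ Fin (Fintype.card V)) (πᵢ : Equiv.Perm (Fin (Fintype.card V))),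
          IsPermGraph (monoEdge c i) ℓᵢ πᵢ ∧ IsSeparablePerm πᵢ) :=
  stmt18_general k c hc
end
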